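/- arXiv:2402.04718 — 3 statements merged into one kernel-verified Lean document; each statement's English description precedes it below -/
import Mathlib

section
/- Let n ≥ 1, let b₀ be a real symmetric positive-definite n×n matrix with largest eigenvalue λ_max, and let ε > 0, D̃ > 0, K_lb > D̃ be constants. Let d : ℝ → ℝⁿ satisfy ‖d(t)‖₂ < D̃ for all t, let K : ℝ → ℝ be continuous with K(t) ≥ K_lb for all t, define u(t) := −(K(t)/ε)·s(t), and suppose s : ℝ → ℝⁿ is differentiable with s'(t) = λ_max⁻¹·d(t) + b₀⁻¹·u(t). Set V(t) := (1/2)·s(t)ᵀ b₀ s(t) and κ₀ := √(2/λ_max)·(K_lb − D̃) > 0. Then: (i) there exists a time T with 0 ≤ T ≤ 2√(V(0))/κ₀ such that ‖s(T)‖₂ ≤ ε; and (ii) for all t₁ ≤ t₂, if ‖s(t₁)‖₂ ≤ ε then ‖s(t₂)‖₂ ≤ ε. -/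
/-!
With `V = ½ sᵀ b₀ s` the closed loop gives `V' = λ⁻¹ sᵀ b₀ d - (K/ε) ‖s‖²`. Since `b₀ ≤ λ_max`,
Cauchy–Schwarz for the form of `b₀` bounds the first term by `‖s‖ ‖d‖`, and outside the ball
`‖s‖ ≤ ε` the second one dominates, so `V' ≤ -(K_lb - D̃) ‖s‖ ≤ -κ₀ √V`. Thus `√V` decreases at
rate at least `κ₀ / 2` as long as `s` stays outside the ball, which it therefore enters by time
`2 √V(0) / κ₀`. The ball is not a sublevel set of `V`, so invariance uses `‖s‖²` instead:
`(‖s‖²)' = 2 λ⁻¹ sᵀ d - 2 (K/ε) sᵀ b₀⁻¹ s` with `sᵀ b₀⁻¹ s ≥ λ⁻¹ ‖s‖²`, which is negative on the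
sphere `‖s‖ = ε`.
-/

/-- Euclidean norm on `ℝⁿ`. -/
noncomputable def norm2 {n : ℕ} (x : Fin n → ℝ) : ℝ := Real.sqrt (∑ i, x i ^ 2)

open Matrix Set

section Spectral

variable {n : Type*} [Fintype n] {A : Matrix n n ℝ} {c : ℝ}

theorem Matrix.IsSymm.dotProduct_mulVec_comm {R : Type*} [CommSemiring R] {B : Matrix n n R}
    (hB : B.IsSymm) (x y : n → R) : x ⬝ᵥ B *ᵥ y = y ⬝ᵥ B *ᵥ x := by
  rw [dotProduct_mulVec, ← mulVec_transpose, hB.eq, dotProduct_comm]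

theorem Matrix.PosSemidef.dotProduct_mulVec_sq_le (hA : A.PosSemidef) (x y : n → ℝ) :
    (x ⬝ᵥ A *ᵥ y) ^ 2 ≤ (x ⬝ᵥ A *ᵥ x) * (y ⬝ᵥ A *ᵥ y) := by
  have hsymm := (isHermitian_iff_isSymm.mp hA.isHermitian).dotProduct_mulVec_comm y x
  have hquad (t : ℝ) :
      0 ≤ (y ⬝ᵥ A *ᵥ y) * (t * t) + 2 * (x ⬝ᵥ A *ᵥ y) * t + x ⬝ᵥ A *ᵥ x := by
    have := hA.dotProduct_mulVec_nonneg (x + t • y)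
    simp only [star_trivial, mulVec_add, mulVec_smul, dotProduct_add, add_dotProduct,
      dotProduct_smul, smul_dotProduct, smul_eq_mul, hsymm] at this
    linarith
  have := discrim_le_zero hquad
  rw [discrim] at this
  linarith

variable [DecidableEq n]

theorem dotProduct_mulVec_self_le_mul_dotProduct_self (h : (c • 1 - A).PosSemidef) (x : n → ℝ) :
    x ⬝ᵥ A *ᵥ x ≤ c * (x ⬝ᵥ x) := by
  have := h.dotProduct_mulVec_nonneg x
  simp only [star_trivial, sub_mulVec, smul_mulVec, one_mulVec, dotProduct_sub,
    dotProduct_smul, smul_eq_mul] at this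
  linarith

theorem Matrix.PosDef.inv_mul_dotProduct_self_le (hA : A.PosDef) (h : (c • 1 - A).PosSemidef)
    (x : n → ℝ) :
    c⁻¹ * (x ⬝ᵥ x) ≤ x ⬝ᵥ A⁻¹ *ᵥ x := by
  set q := x ⬝ᵥ A⁻¹ *ᵥ x
  have hq : 0 ≤ q := by simpa using hA.inv.posSemidef.dotProduct_mulVec_nonneg x
  have hAy : A *ᵥ (A⁻¹ *ᵥ x) = x := by
    rw [mulVec_mulVec, mul_nonsing_inv _ ((isUnit_iff_isUnit_det A).mp hA.isUnit), one_mulVec]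
  have hyAy : A⁻¹ *ᵥ x ⬝ᵥ A *ᵥ (A⁻¹ *ᵥ x) = q := by rw [hAy, dotProduct_comm]
  have hcs := hA.posSemidef.dotProduct_mulVec_sq_le x (A⁻¹ *ᵥ x)
  rw [hyAy, hAy] at hcs
  have hxx : 0 ≤ x ⬝ᵥ x := by simpa using dotProduct_star_self_nonneg x
  have hsq : (x ⬝ᵥ x) ^ 2 ≤ c * (x ⬝ᵥ x) * q :=
    hcs.trans (mul_le_mul_of_nonneg_right (dotProduct_mulVec_self_le_mul_dotProduct_self h x) hq)
  rcases hxx.eq_or_lt with h0 | hpos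
  · simpa [← h0] using hq
  · have hcq : x ⬝ᵥ x ≤ c * q := by nlinarith
    have hc : 0 < c := pos_of_mul_pos_left (hpos.trans_le hcq) hq
    rw [inv_mul_le_iff₀ hc]
    exact hcq

theorem Matrix.IsHermitian.posSemidef_smul_one_sub (hA : A.IsHermitian)
    (hc : ∀ μ, Module.End.HasEigenvalue (toLin' A) μ → μ ≤ c) : (c • 1 - A).PosSemidef := by
  rw [posSemidef_iff_isHermitian_and_spectrum_nonneg, ← Algebra.algebraMap_eq_smul_one,
    ← spectrum.singleton_sub_eq]
  refine ⟨(IsSelfAdjoint.algebraMap _ (.all c)).sub hA, ?_⟩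
  rintro _ ⟨_, rfl, μ, hμ, rfl⟩
  rw [← spectrum_toLin', ← Module.End.hasEigenvalue_iff_mem_spectrum] at hμ
  simpa using hc μ hμ

theorem Matrix.PosDef.pos_of_hasEigenvalue (hA : A.PosDef) {μ : ℝ}
    (hμ : Module.End.HasEigenvalue (toLin' A) μ) : 0 < μ := by
  rw [Module.End.hasEigenvalue_iff_mem_spectrum, spectrum_toLin',
    hA.isHermitian.spectrum_real_eq_range_eigenvalues] at hμ
  obtain ⟨i, rfl⟩ := hμ
  exact hA.eigenvalues_pos i

end Spectral

section Norm2

variable {n : ℕ}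

theorem norm2_eq_sqrt_dotProduct (x : Fin n → ℝ) : norm2 x = √(x ⬝ᵥ x) := by
  simp [norm2, dotProduct, sq]

theorem norm2_nonneg (x : Fin n → ℝ) : 0 ≤ norm2 x := Real.sqrt_nonneg _

theorem norm2_sq (x : Fin n → ℝ) : norm2 x ^ 2 = x ⬝ᵥ x := by
  rw [norm2_eq_sqrt_dotProduct, Real.sq_sqrt (by simpa using dotProduct_star_self_nonneg x)]

theorem norm2_le_iff {x : Fin n → ℝ} {ε : ℝ} (hε : 0 ≤ ε) : norm2 x ≤ ε ↔ x ⬝ᵥ x ≤ ε ^ 2 := by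
  rw [norm2_eq_sqrt_dotProduct, Real.sqrt_le_left hε]

theorem dotProduct_mulVec_le_mul_norm2_mul_norm2 {A : Matrix (Fin n) (Fin n) ℝ} {c : ℝ}
    (hA : A.PosSemidef) (h : (c • 1 - A).PosSemidef) (hc : 0 ≤ c) (x y : Fin n → ℝ) :
    x ⬝ᵥ A *ᵥ y ≤ c * (norm2 x * norm2 y) := by
  have hx := dotProduct_mulVec_self_le_mul_dotProduct_self h x
  have hy := dotProduct_mulVec_self_le_mul_dotProduct_self h y
  rw [← norm2_sq] at hx hy
  refine le_of_sq_le_sq ?_ (by have := norm2_nonneg x; have := norm2_nonneg y; positivity)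
  calc (x ⬝ᵥ A *ᵥ y) ^ 2 ≤ (x ⬝ᵥ A *ᵥ x) * (y ⬝ᵥ A *ᵥ y) := hA.dotProduct_mulVec_sq_le x y
    _ ≤ (c * norm2 x ^ 2) * (c * norm2 y ^ 2) :=
      mul_le_mul hx hy (by simpa using hA.dotProduct_mulVec_nonneg y) (by positivity)
    _ = (c * (norm2 x * norm2 y)) ^ 2 := by ring

theorem dotProduct_le_norm2_mul_norm2 (x y : Fin n → ℝ) : x ⬝ᵥ y ≤ norm2 x * norm2 y := by
  simpa using dotProduct_mulVec_le_mul_norm2_mul_norm2 PosSemidef.one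
    (by simpa using PosSemidef.zero) zero_le_one x y

theorem sqrt_two_div_mul_sqrt_le_norm2 {A : Matrix (Fin n) (Fin n) ℝ} {c : ℝ}
    (h : (c • 1 - A).PosSemidef) (hc : 0 < c) (x : Fin n → ℝ) :
    √(2 / c) * √(1 / 2 * (x ⬝ᵥ A *ᵥ x)) ≤ norm2 x := by
  rw [← Real.sqrt_mul (by positivity), norm2_eq_sqrt_dotProduct]
  refine Real.sqrt_le_sqrt ?_
  have := dotProduct_mulVec_self_le_mul_dotProduct_self h x
  calc 2 / c * (1 / 2 * (x ⬝ᵥ A *ᵥ x)) = (x ⬝ᵥ A *ᵥ x) / c := by field_simp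
    _ ≤ x ⬝ᵥ x := by rw [div_le_iff₀ hc]; linarith

end Norm2

section Derivatives

variable {ι : Type*} [Fintype ι] {f g : ℝ → ι → ℝ} {f' g' : ι → ℝ} {t : ℝ}

theorem HasDerivAt.dotProduct (hf : HasDerivAt f f' t) (hg : HasDerivAt g g' t) :
    HasDerivAt (fun t => f t ⬝ᵥ g t) (f' ⬝ᵥ g t + f t ⬝ᵥ g') t := by
  show HasDerivAt (fun t => ∑ i, f t i * g t i) (∑ i, f' i * g t i + ∑ i, f t i * g' i) t
  rw [← Finset.sum_add_distrib]
  exact HasDerivAt.fun_sum fun i _ => (hasDerivAt_pi.1 hf i).mul (hasDerivAt_pi.1 hg i)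

theorem HasDerivAt.dotProduct_self (hf : HasDerivAt f f' t) :
    HasDerivAt (fun t => f t ⬝ᵥ f t) (2 * (f t ⬝ᵥ f')) t := by
  convert hf.dotProduct hf using 1
  rw [dotProduct_comm]
  ring

theorem HasDerivAt.mulVec (B : Matrix ι ι ℝ) (hf : HasDerivAt f f' t) :
    HasDerivAt (fun t => B *ᵥ f t) (B *ᵥ f') t :=
  (LinearMap.toContinuousLinearMap (mulVecLin B)).hasFDerivAt.comp_hasDerivAt t hf

theorem HasDerivAt.dotProduct_mulVec_self {B : Matrix ι ι ℝ} (hB : B.IsSymm)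
    (hf : HasDerivAt f f' t) :
    HasDerivAt (fun t => f t ⬝ᵥ B *ᵥ f t) (2 * (f t ⬝ᵥ B *ᵥ f')) t := by
  convert hf.dotProduct (hf.mulVec B) using 1
  rw [hB.dotProduct_mulVec_comm]
  ring

end Derivatives

theorem le_of_hasDerivAt_neg_of_eq {f f' : ℝ → ℝ} {c a b : ℝ}
    (hf : ∀ t, HasDerivAt f (f' t) t) (hneg : ∀ t, f t = c → f' t < 0) (hab : a ≤ b)
    (ha : f a ≤ c) : f b ≤ c :=
  image_le_of_deriv_right_lt_deriv_boundary (B := fun _ => c) (B' := 0)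
    (fun t _ => (hf t).continuousAt.continuousWithinAt) (fun t _ => (hf t).hasDerivWithinAt) ha
    (fun _ => hasDerivAt_const _ _) (fun t _ => hneg t) ⟨hab, le_rfl⟩

theorem exists_mem_Icc_of_hasDerivAt_le_neg_mul_sqrt {V V' : ℝ → ℝ} {p : ℝ → Prop} {κ : ℝ}
    (hκ : 0 < κ) (hV : ∀ t, HasDerivAt V (V' t) t) (hpos : ∀ t, ¬p t → 0 < V t)
    (hdecay : ∀ t, ¬p t → V' t ≤ -κ * √(V t)) : ∃ T ∈ Icc 0 (2 * √(V 0) / κ), p T := by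
  by_contra! h
  set T₀ := 2 * √(V 0) / κ
  have hT₀ : 0 ≤ T₀ := by positivity
  have hsqrt (x : ℝ) (hx : x ∈ Ico 0 T₀) :
      HasDerivWithinAt (fun t => √(V t)) (V' x / (2 * √(V x))) (Ici x) x :=
    ((hV x).sqrt (hpos x (h x (Ico_subset_Icc_self hx))).ne').hasDerivWithinAt
  have hline (x : ℝ) : HasDerivAt (fun t => √(V 0) - κ / 2 * t) (-(κ / 2)) x := by
    simpa using ((hasDerivAt_id x).const_mul (κ / 2)).const_sub (√(V 0))
  have hslope (x : ℝ) (hx : x ∈ Ico 0 T₀) : V' x / (2 * √(V x)) ≤ -(κ / 2) := by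
    have hVx := Real.sqrt_pos.2 (hpos x (h x (Ico_subset_Icc_self hx)))
    rw [div_le_iff₀ (by positivity)]
    linarith [hdecay x (h x (Ico_subset_Icc_self hx))]
  have hT := image_le_of_deriv_right_le_deriv_boundary
    (fun x _ => (hV x).continuousAt.continuousWithinAt.sqrt) hsqrt (by simp)
    (fun x _ => (hline x).continuousAt.continuousWithinAt)
    (fun x _ => (hline x).hasDerivWithinAt) hslope (right_mem_Icc.2 hT₀)
  have hzero : κ / 2 * T₀ = √(V 0) := by simp only [T₀]; field_simp
  have := Real.sqrt_pos.2 (hpos T₀ (h T₀ (right_mem_Icc.2 hT₀)))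
  linarith

section ClosedLoop

variable {n : ℕ} {b₀ : Matrix (Fin n) (Fin n) ℝ} {lmax ε k : ℝ} {x w : Fin n → ℝ}

noncomputable def closedLoopField (b₀ : Matrix (Fin n) (Fin n) ℝ) (lmax ε k : ℝ)
    (w x : Fin n → ℝ) : Fin n → ℝ :=
  lmax⁻¹ • w + b₀⁻¹ *ᵥ (-(k / ε) • x)

theorem dotProduct_mulVec_closedLoopField_le (hpd : b₀.PosDef) (hb : (lmax • 1 - b₀).PosSemidef)
    (hl : 0 < lmax) (hε : 0 < ε) (hk : 0 ≤ k) (hx : ε ≤ norm2 x) :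
    x ⬝ᵥ b₀ *ᵥ closedLoopField b₀ lmax ε k w x ≤ (norm2 w - k) * norm2 x := by
  have hinv : b₀ *ᵥ (b₀⁻¹ *ᵥ x) = x := by
    rw [mulVec_mulVec, mul_nonsing_inv _ ((isUnit_iff_isUnit_det b₀).mp hpd.isUnit), one_mulVec]
  have hdist : lmax⁻¹ * (x ⬝ᵥ b₀ *ᵥ w) ≤ norm2 x * norm2 w := by
    rw [inv_mul_le_iff₀ hl]
    exact dotProduct_mulVec_le_mul_norm2_mul_norm2 hpd.posSemidef hb hl.le x w
  have hctrl : k * norm2 x ≤ k / ε * (x ⬝ᵥ x) := by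
    rw [← norm2_sq, div_mul_eq_mul_div, le_div_iff₀ hε]
    nlinarith [mul_le_mul_of_nonneg_left hx (mul_nonneg hk (norm2_nonneg x))]
  simp only [closedLoopField, mulVec_add, mulVec_smul, hinv, dotProduct_add, dotProduct_smul,
    smul_eq_mul]
  linarith

theorem dotProduct_closedLoopField_neg (hpd : b₀.PosDef) (hb : (lmax • 1 - b₀).PosSemidef)
    (hl : 0 < lmax) (hε : 0 < ε) (hx : norm2 x = ε) (hw : norm2 w < k) :
    x ⬝ᵥ closedLoopField b₀ lmax ε k w x < 0 := by
  have hk : 0 < k := (norm2_nonneg w).trans_lt hw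
  have hdist : x ⬝ᵥ w ≤ ε * norm2 w := hx ▸ dotProduct_le_norm2_mul_norm2 x w
  have hctrl : lmax⁻¹ * ε ^ 2 ≤ x ⬝ᵥ b₀⁻¹ *ᵥ x := by
    rw [← hx, norm2_sq]
    exact hpd.inv_mul_dotProduct_self_le hb x
  rw [closedLoopField, mulVec_smul, dotProduct_add, dotProduct_smul, dotProduct_smul, smul_eq_mul,
    smul_eq_mul]
  calc lmax⁻¹ * (x ⬝ᵥ w) + -(k / ε) * (x ⬝ᵥ b₀⁻¹ *ᵥ x)
      ≤ lmax⁻¹ * (ε * norm2 w) + -(k / ε) * (lmax⁻¹ * ε ^ 2) :=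
        add_le_add (mul_le_mul_of_nonneg_left hdist (by positivity))
          (mul_le_mul_of_nonpos_left hctrl (neg_nonpos.2 (div_pos hk hε).le))
    _ = lmax⁻¹ * ε * (norm2 w - k) := by field_simp; ring
    _ < 0 := mul_neg_of_pos_of_neg (by positivity) (by linarith)

theorem dotProduct_mulVec_closedLoopField_le_neg_mul_sqrt {D Klb : ℝ} (hpd : b₀.PosDef)
    (hb : (lmax • 1 - b₀).PosSemidef) (hl : 0 < lmax) (hε : 0 < ε) (hw : norm2 w < D)
    (hKlb : D < Klb) (hk : Klb ≤ k) (hx : ε ≤ norm2 x) :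
    x ⬝ᵥ b₀ *ᵥ closedLoopField b₀ lmax ε k w x ≤
      -(√(2 / lmax) * (Klb - D)) * √(1 / 2 * (x ⬝ᵥ b₀ *ᵥ x)) := by
  have hk0 : 0 ≤ k := by linarith [norm2_nonneg w]
  calc x ⬝ᵥ b₀ *ᵥ closedLoopField b₀ lmax ε k w x ≤ (norm2 w - k) * norm2 x :=
        dotProduct_mulVec_closedLoopField_le hpd hb hl hε hk0 hx
    _ ≤ -(Klb - D) * norm2 x := mul_le_mul_of_nonneg_right (by linarith) (norm2_nonneg x)
    _ ≤ -(Klb - D) * (√(2 / lmax) * √(1 / 2 * (x ⬝ᵥ b₀ *ᵥ x))) :=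
        mul_le_mul_of_nonpos_left (sqrt_two_div_mul_sqrt_le_norm2 hb hl x) (by linarith)
    _ = -(√(2 / lmax) * (Klb - D)) * √(1 / 2 * (x ⬝ᵥ b₀ *ᵥ x)) := by ring

end ClosedLoop

theorem reaching_and_invariance_general
    (n : ℕ)
    (b₀ : Matrix (Fin n) (Fin n) ℝ) (hpd : b₀.PosDef)
    (lmax : ℝ)
    (hlmax : IsGreatest {μ : ℝ | Module.End.HasEigenvalue (Matrix.toLin' b₀) μ} lmax)
    (ε D Klb : ℝ) (hε : 0 < ε) (hKlb : D < Klb)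
    (d : ℝ → Fin n → ℝ) (hd : ∀ t, norm2 (d t) < D)
    (K : ℝ → ℝ) (hK : ∀ t, Klb ≤ K t)
    (s : ℝ → Fin n → ℝ) (hs : Differentiable ℝ s)
    (u : ℝ → Fin n → ℝ) (hu : ∀ t, u t = -(K t / ε) • s t)
    (hs' : ∀ t, deriv s t = lmax⁻¹ • d t + Matrix.mulVec b₀⁻¹ (u t)) :
    (∃ T, 0 ≤ T ∧
        T ≤ 2 * Real.sqrt ((1 / 2 : ℝ) * dotProduct (s 0) (Matrix.mulVec b₀ (s 0))) /
              (Real.sqrt (2 / lmax) * (Klb - D)) ∧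
        norm2 (s T) ≤ ε) ∧
    (∀ t₁ t₂, t₁ ≤ t₂ → norm2 (s t₁) ≤ ε → norm2 (s t₂) ≤ ε) := by
  have hl : 0 < lmax := hpd.pos_of_hasEigenvalue hlmax.1
  have hb : (lmax • 1 - b₀).PosSemidef := hpd.isHermitian.posSemidef_smul_one_sub hlmax.2
  have hds (t : ℝ) : HasDerivAt s (closedLoopField b₀ lmax ε (K t) (d t) (s t)) t := by
    rw [closedLoopField, ← hu, ← hs']
    exact (hs t).hasDerivAt
  refine ⟨?_, fun t₁ t₂ h12 h₁ => ?_⟩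
  · have hV (t : ℝ) := ((hds t).dotProduct_mulVec_self
      (isHermitian_iff_isSymm.mp hpd.isHermitian)).const_mul (1 / 2)
    have hpos (t : ℝ) (ht : ¬norm2 (s t) ≤ ε) : 0 < 1 / 2 * (s t ⬝ᵥ b₀ *ᵥ s t) := by
      have hs0 : s t ≠ 0 := fun h0 => ht (by simp [h0, norm2, hε.le])
      simpa using hpd.dotProduct_mulVec_pos hs0
    have hdecay (t : ℝ) (ht : ¬norm2 (s t) ≤ ε) :=
      dotProduct_mulVec_closedLoopField_le_neg_mul_sqrt hpd hb hl hε (hd t) hKlb (hK t)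
        (not_le.1 ht).le
    obtain ⟨T, ⟨hT₀, hT⟩, hsT⟩ := exists_mem_Icc_of_hasDerivAt_le_neg_mul_sqrt
      (mul_pos (Real.sqrt_pos.2 (div_pos two_pos hl)) (sub_pos.2 hKlb)) hV hpos
      (fun t ht => by linarith [hdecay t ht])
    exact ⟨T, hT₀, hT, hsT⟩
  · rw [norm2_le_iff hε.le] at h₁ ⊢
    refine le_of_hasDerivAt_neg_of_eq (fun t => (hds t).dotProduct_self) (fun t ht => ?_) h12 h₁
    have hst : norm2 (s t) = ε := by rw [norm2_eq_sqrt_dotProduct, ht, Real.sqrt_sq hε.le]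
    have hdK : norm2 (d t) < K t := (hd t).trans (hKlb.trans_le (hK t))
    linarith [dotProduct_closedLoopField_neg hpd hb hl hε hst hdK]

/-- Lemma 1 (finite-time reaching and invariance): the sliding variable
enters the region `‖s‖₂ ≤ ε` within time `2√(V(0))/κ₀`, where
`κ₀ = √(2/λ_max)(K_lb − D̃)`, and remains there afterwards. -/
theorem reaching_and_invariance
    (n : ℕ) (hn : 1 ≤ n)
    (b₀ : Matrix (Fin n) (Fin n) ℝ) (hsymm : b₀.IsSymm) (hpd : b₀.PosDef)
    (lmax : ℝ)
    (hlmax : IsGreatest {μ : ℝ | Module.End.HasEigenvalue (Matrix.toLin' b₀) μ} lmax)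
    (ε D Klb : ℝ) (hε : 0 < ε) (hD : 0 < D) (hKlb : D < Klb)
    (d : ℝ → Fin n → ℝ) (hd : ∀ t, norm2 (d t) < D)
    (K : ℝ → ℝ) (hKcont : Continuous K) (hK : ∀ t, Klb ≤ K t)
    (s : ℝ → Fin n → ℝ) (hs : Differentiable ℝ s)
    (u : ℝ → Fin n → ℝ) (hu : ∀ t, u t = -(K t / ε) • s t)
    (hs' : ∀ t, deriv s t = lmax⁻¹ • d t + Matrix.mulVec b₀⁻¹ (u t)) :
    (∃ T, 0 ≤ T ∧
        T ≤ 2 * Real.sqrt ((1 / 2 : ℝ) * dotProduct (s 0) (Matrix.mulVec b₀ (s 0))) /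
              (Real.sqrt (2 / lmax) * (Klb - D)) ∧
        norm2 (s T) ≤ ε) ∧
    (∀ t₁ t₂, t₁ ≤ t₂ → norm2 (s t₁) ≤ ε → norm2 (s t₂) ≤ ε) :=
  reaching_and_invariance_general n b₀ hpd lmax hlmax ε D Klb hε hKlb d hd K hK s hs u hu hs'
end

section
/- Let ε, α, β > 0 and ρ ∈ (1,2) be real constants, let R > 0 be the unique zero of F(x) := ε − α·sig^ρ(x) − β·x, and let t₀ ∈ ℝ. Suppose r : ℝ → ℝ is differentiable and satisfies the sliding-variable bound |r'(t) + α·sig^ρ(r(t)) + β·r(t)| ≤ ε for all t ≥ t₀, and |r(t₀)| ≤ R. Then |r(t)| ≤ R for all t ≥ t₀. -/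
/-!
Wherever `r > R`, monotonicity of `sig^ρ` gives `α sig^ρ(r) + β r ≥ α sig^ρ(R) + β R = ε`, so the
sliding bound forces `r' ≤ 0`: a function whose derivative is nonpositive above a level it starts
below never rises above that level.
-/

/-- `sig^ρ(x) = |x|^ρ · sgn(x)`. -/
noncomputable def sig (ρ x : ℝ) : ℝ := |x| ^ ρ * Real.sign x

open Set

theorem sig_neg (ρ x : ℝ) : sig ρ (-x) = -sig ρ x := by
  simp only [sig, abs_neg, Real.sign_neg, mul_neg]

theorem sig_of_pos (ρ : ℝ) {x : ℝ} (hx : 0 < x) : sig ρ x = x ^ ρ := by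
  rw [sig, abs_of_pos hx, Real.sign_of_pos hx, mul_one]

theorem sig_monotone {ρ : ℝ} (hρ : 0 ≤ ρ) : Monotone (sig ρ) := by
  refine monotone_of_odd_of_monotoneOn_nonneg (sig_neg ρ) fun x hx y hy hxy => ?_
  rcases (mem_Ici.1 hx).eq_or_lt with rfl | hx₀
  · rcases (mem_Ici.1 hy).eq_or_lt with rfl | hy₀
    · rfl
    · rw [sig_of_pos ρ hy₀, sig, Real.sign_zero, mul_zero]
      positivity
  · rw [sig_of_pos ρ hx₀, sig_of_pos ρ (hx₀.trans_le hxy)]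
    exact Real.rpow_le_rpow hx₀.le hxy hρ

theorem le_of_deriv_nonpos_of_lt {u : ℝ → ℝ} {t₀ c : ℝ} (hu : Differentiable ℝ u)
    (h₀ : u t₀ ≤ c) (hd : ∀ t, t₀ ≤ t → c < u t → deriv u t ≤ 0) :
    ∀ t, t₀ ≤ t → u t ≤ c := by
  intro t ht
  -- Fence `u` by the lines `c + δ (1 + (s - t₀))`: `u` can only touch one above `c`, where it
  -- grows strictly slower than the line; then let `δ → 0`.
  have fenced : ∀ δ > 0, u t ≤ c + δ * (1 + (t - t₀)) := by
    intro δ hδ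
    have hB : ∀ s, HasDerivAt (fun s => c + δ * (1 + (s - t₀))) δ s := fun s => by
      simpa using ((((hasDerivAt_id s).sub_const t₀).const_add 1).const_mul δ).const_add c
    refine image_le_of_deriv_right_lt_deriv_boundary hu.continuous.continuousOn
      (fun s _ => (hu s).hasDerivAt.hasDerivWithinAt) ?_ hB ?_ ⟨ht, le_rfl⟩
    · rw [sub_self, add_zero, mul_one]
      linarith
    · intro s hs hus
      have hc : c < u s := hus ▸ lt_add_of_pos_right c (mul_pos hδ (by linarith [hs.1]))
      exact (hd s hs.1 hc).trans_lt hδ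
  have hlen : 0 < 1 + (t - t₀) := by linarith
  refine le_of_forall_pos_le_add fun η hη => ?_
  simpa [div_mul_cancel₀ _ hlen.ne'] using fenced (η / (1 + (t - t₀))) (by positivity)

theorem le_of_deriv_add_sig_le {ε α β ρ R t₀ : ℝ} {r : ℝ → ℝ} (hα : 0 ≤ α) (hβ : 0 ≤ β)
    (hρ : 0 ≤ ρ) (hFR : ε - α * sig ρ R - β * R = 0) (hr : Differentiable ℝ r)
    (hbound : ∀ t, t₀ ≤ t → deriv r t + α * sig ρ (r t) + β * r t ≤ ε) (hinit : r t₀ ≤ R) :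
    ∀ t, t₀ ≤ t → r t ≤ R := by
  refine le_of_deriv_nonpos_of_lt hr hinit fun t ht hRt => ?_
  have hsig : sig ρ R ≤ sig ρ (r t) := sig_monotone hρ hRt.le
  nlinarith [hbound t ht]

theorem error_bound_invariance_general
    (ε α β ρ : ℝ) (hα : 0 < α) (hβ : 0 < β)
    (hρ : ρ ∈ Set.Ioo (1 : ℝ) 2)
    (R : ℝ)
    (hFR : ε - α * sig ρ R - β * R = 0)
    (t₀ : ℝ) (r : ℝ → ℝ) (hr : Differentiable ℝ r)
    (hbound : ∀ t, t₀ ≤ t → |deriv r t + α * sig ρ (r t) + β * r t| ≤ ε)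
    (hinit : |r t₀| ≤ R) :
    ∀ t, t₀ ≤ t → |r t| ≤ R := by
  have hρ₀ : 0 ≤ ρ := by linarith [hρ.1]
  intro t ht
  rw [abs_le] at hinit ⊢
  have upper := le_of_deriv_add_sig_le hα.le hβ.le hρ₀ hFR hr
    (fun s hs => (abs_le.1 (hbound s hs)).2) hinit.2 t ht
  -- Since `sig ρ` is odd, `-r` satisfies the same sliding bound as `r`.
  have lower := le_of_deriv_add_sig_le hα.le hβ.le hρ₀ hFR hr.neg
    (fun s hs => by
      simp only [deriv.neg', Pi.neg_apply, sig_neg]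
      linarith [(abs_le.1 (hbound s hs)).1])
    (by simp only [Pi.neg_apply]; linarith [hinit.1]) t ht
  exact ⟨by simp only [Pi.neg_apply] at lower; linarith, upper⟩

/-- Lemma 4 (invariance of the error bound): if the sliding-variable bound
`|r' + α·sig^ρ(r) + β·r| ≤ ε` holds for `t ≥ t₀` and `|r(t₀)| ≤ R`, where
`R > 0` is the unique zero of `F(x) = ε − α·sig^ρ(x) − β·x`, then
`|r(t)| ≤ R` for all `t ≥ t₀`. -/
theorem error_bound_invariance
    (ε α β ρ : ℝ) (hε : 0 < ε) (hα : 0 < α) (hβ : 0 < β)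
    (hρ : ρ ∈ Set.Ioo (1 : ℝ) 2)
    (R : ℝ) (hR : 0 < R)
    (hFR : ε - α * sig ρ R - β * R = 0)
    (hFuniq : ∀ x : ℝ, ε - α * sig ρ x - β * x = 0 → x = R)
    (t₀ : ℝ) (r : ℝ → ℝ) (hr : Differentiable ℝ r)
    (hbound : ∀ t, t₀ ≤ t → |deriv r t + α * sig ρ (r t) + β * r t| ≤ ε)
    (hinit : |r t₀| ≤ R) :
    ∀ t, t₀ ≤ t → |r t| ≤ R :=
  error_bound_invariance_general ε α β ρ hα hβ hρ R hFR t₀ r hr hbound hinit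
end

section
/- Let ρ ∈ (1,2) and for i = 1,2,3 let αᵢ > 0 and βᵢ > 0 be real constants. Suppose q_v : ℝ → ℝ³ and q₄ : ℝ → ℝ are differentiable and satisfy the quaternion error kinematics q_v'(t) = (1/2)·(q₄(t)·ω(t) + q_v(t) × ω(t)) and q₄'(t) = −(1/2)·⟨q_v(t), ω(t)⟩, where the angular velocity error lies on the sliding surface: ωᵢ(t) = −αᵢ·sig^ρ(q_{v,i}(t)) − βᵢ·q_{v,i}(t) for i = 1,2,3. Assume the unit-quaternion constraint ‖q_v(t)‖₂² + q₄(t)² = 1 holds for all t ≥ 0 and that q₄(0) ≥ 0. Then q_v(t) → 0 as t → ∞. -/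
open Filter Topology Real Set

lemma mul_sig_nonneg (ρ x : ℝ) : 0 ≤ x * sig ρ x := by
  have hpow : 0 ≤ |x| ^ ρ := rpow_nonneg (abs_nonneg x) ρ
  unfold sig
  rcases lt_trichotomy x 0 with hx | rfl | hx
  · rw [Real.sign_of_neg hx]; nlinarith
  · simp
  · rw [Real.sign_of_pos hx]; nlinarith

lemma mul_sum_sq_le_neg_sum_mul_sliding {ι : Type*} [Fintype ι] (ρ : ℝ) {α β : ι → ℝ} {b : ℝ}
    (hα : ∀ i, 0 ≤ α i) (hb : ∀ i, b ≤ β i) (q : ι → ℝ) :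
    b * ∑ i, q i ^ 2 ≤ -∑ i, q i * (-α i * sig ρ (q i) - β i * q i) := by
  rw [Finset.mul_sum, ← Finset.sum_neg_distrib]
  refine Finset.sum_le_sum fun i _ => ?_
  have := mul_nonneg (hα i) (mul_sig_nonneg ρ (q i))
  nlinarith [hb i, sq_nonneg (q i)]

lemma tendsto_zero_of_tendsto_sum_sq {α ι : Type*} [Fintype ι] {l : Filter α} {q : α → ι → ℝ}
    (h : Tendsto (fun t => ∑ i, q t i ^ 2) l (𝓝 0)) : Tendsto q l (𝓝 0) := by
  refine squeeze_zero_norm (fun t => (pi_norm_le_iff_of_nonneg (sqrt_nonneg _)).2 fun i =>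
    abs_le_sqrt (Finset.single_le_sum (fun j _ => sq_nonneg (q t j)) (Finset.mem_univ i))) ?_
  simpa using h.sqrt

section

variable {f : ℝ → ℝ} {k : ℝ}

lemma monotoneOn_Ici_of_deriv_ge (hf : Differentiable ℝ f) (hk : 0 ≤ k)
    (hsq : ∀ t, 0 ≤ t → f t ^ 2 ≤ 1) (hderiv : ∀ t, 0 ≤ t → k * (1 - f t ^ 2) ≤ deriv f t) :
    MonotoneOn f (Ici 0) := by
  refine monotoneOn_of_deriv_nonneg (convex_Ici 0) hf.continuous.continuousOn
    hf.differentiableOn fun t ht => ?_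
  rw [interior_Ici] at ht
  exact (mul_nonneg hk (sub_nonneg.2 (hsq t ht.le))).trans (hderiv t ht.le)

lemma one_sub_le_mul_exp_of_deriv_ge (hf : Differentiable ℝ f) (hk : 0 ≤ k) (h0 : 0 ≤ f 0)
    (hsq : ∀ t, 0 ≤ t → f t ^ 2 ≤ 1) (hderiv : ∀ t, 0 ≤ t → k * (1 - f t ^ 2) ≤ deriv f t)
    {t : ℝ} (ht : 0 ≤ t) : 1 - f t ≤ (1 - f 0) * exp (-k * t) := by
  have hmono := monotoneOn_Ici_of_deriv_ge hf hk hsq hderiv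
  -- on `[0, ∞)` we have `0 ≤ f ≤ 1`, so `1 - f² ≥ 1 - f` and `g := 1 - f` satisfies `g' ≤ -k g`
  have hg : ∀ s ∈ Ico 0 t, -deriv f s ≤ -k * (1 - f s) + 0 := by
    rintro s ⟨hs, -⟩
    have hfs : 0 ≤ f s := h0.trans (hmono self_mem_Ici hs hs)
    have hf1 : f s ≤ 1 := by nlinarith [hsq s hs]
    nlinarith [hderiv s hs, mul_nonneg hk (mul_nonneg hfs (sub_nonneg.2 hf1))]
  have := le_gronwallBound_of_liminf_deriv_right_le (f := fun s => 1 - f s) (δ := 1 - f 0)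
    (continuous_const.sub hf.continuous).continuousOn (fun s _ r hr =>
      ((hf s).hasDerivAt.const_sub 1).hasDerivWithinAt.liminf_right_slope_le hr)
    le_rfl hg t ⟨ht, le_rfl⟩
  simpa [gronwallBound_ε0] using this

lemma tendsto_one_of_deriv_ge (hf : Differentiable ℝ f) (hk : 0 < k) (h0 : 0 ≤ f 0)
    (hsq : ∀ t, 0 ≤ t → f t ^ 2 ≤ 1) (hderiv : ∀ t, 0 ≤ t → k * (1 - f t ^ 2) ≤ deriv f t) :
    Tendsto f atTop (𝓝 1) := by
  have hexp : Tendsto (fun t => (1 - f 0) * exp (-k * t)) atTop (𝓝 0) := by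
    simpa using (tendsto_exp_atBot.comp
      (tendsto_id.const_mul_atTop_of_neg (neg_lt_zero.2 hk))).const_mul (1 - f 0)
  have hgap : Tendsto (fun t => 1 - f t) atTop (𝓝 0) := by
    refine tendsto_of_tendsto_of_tendsto_of_le_of_le' tendsto_const_nhds hexp ?_ ?_
    · filter_upwards [eventually_ge_atTop 0] with t ht
      nlinarith [hsq t ht]
    · filter_upwards [eventually_ge_atTop 0] with t ht
      exact one_sub_le_mul_exp_of_deriv_ge hf hk.le h0 hsq hderiv ht
  simpa using hgap.const_sub 1

end

theorem attitude_sliding_asymptotic_stability_general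
    (ρ : ℝ)
    (α β : Fin 3 → ℝ) (hα : ∀ i, 0 < α i) (hβ : ∀ i, 0 < β i)
    (qv : ℝ → Fin 3 → ℝ) (q₄ : ℝ → ℝ) (ω : ℝ → Fin 3 → ℝ)
    (hq₄ : Differentiable ℝ q₄)
    (hω : ∀ t i, ω t i = -α i * sig ρ (qv t i) - β i * qv t i)
    (hkin_4 : ∀ t, deriv q₄ t = -(1 / 2) * ∑ i, qv t i * ω t i)
    (hunit : ∀ t, 0 ≤ t → (∑ i, (qv t i) ^ 2) + (q₄ t) ^ 2 = 1)
    (h40 : 0 ≤ q₄ 0) :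
    Filter.Tendsto qv Filter.atTop (nhds 0) := by
  obtain ⟨i₀, hi₀⟩ := Finite.exists_min β
  have hsq : ∀ t, 0 ≤ t → q₄ t ^ 2 ≤ 1 := fun t ht => by
    nlinarith [hunit t ht, Finset.sum_nonneg fun i (_ : i ∈ Finset.univ) => sq_nonneg (qv t i)]
  have hderiv : ∀ t, 0 ≤ t → β i₀ / 2 * (1 - q₄ t ^ 2) ≤ deriv q₄ t := fun t ht => by
    have := mul_sum_sq_le_neg_sum_mul_sliding ρ (fun i => (hα i).le) hi₀ (qv t)
    rw [eq_sub_of_add_eq (hunit t ht)] at this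
    simp only [hkin_4 t, hω t]
    linarith
  have hq₄_one := tendsto_one_of_deriv_ge hq₄ (half_pos (hβ i₀)) h40 hsq hderiv
  have hsum : Tendsto (fun t => ∑ i, qv t i ^ 2) atTop (𝓝 0) := by
    have h := (hq₄_one.pow 2).const_sub 1
    rw [one_pow, sub_self] at h
    refine h.congr' ?_
    filter_upwards [eventually_ge_atTop 0] with t ht
    linarith [hunit t ht]
  exact tendsto_zero_of_tendsto_sum_sq hsum

/-- Proposition 2 (asymptotic stability on the attitude sliding surface):
under the quaternion error kinematics with the angular velocity error on
the sliding surface `ωᵢ = −αᵢ·sig^ρ(q_{v,i}) − βᵢ·q_{v,i}`, the unit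
constraint and `q₄(0) ≥ 0`, the quaternion error vector tends to zero. -/
theorem attitude_sliding_asymptotic_stability
    (ρ : ℝ) (hρ : ρ ∈ Set.Ioo (1 : ℝ) 2)
    (α β : Fin 3 → ℝ) (hα : ∀ i, 0 < α i) (hβ : ∀ i, 0 < β i)
    (qv : ℝ → Fin 3 → ℝ) (q₄ : ℝ → ℝ) (ω : ℝ → Fin 3 → ℝ)
    (hqv : Differentiable ℝ qv) (hq₄ : Differentiable ℝ q₄)
    (hω : ∀ t i, ω t i = -α i * sig ρ (qv t i) - β i * qv t i)
    (hkin_v : ∀ t, deriv qv t =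
      (1 / 2 : ℝ) • (q₄ t • ω t + crossProduct (qv t) (ω t)))
    (hkin_4 : ∀ t, deriv q₄ t = -(1 / 2) * ∑ i, qv t i * ω t i)
    (hunit : ∀ t, 0 ≤ t → (∑ i, (qv t i) ^ 2) + (q₄ t) ^ 2 = 1)
    (h40 : 0 ≤ q₄ 0) :
    Filter.Tendsto qv Filter.atTop (nhds 0) :=
  attitude_sliding_asymptotic_stability_general ρ α β hα hβ qv q₄ ω hq₄ hω hkin_4 hunit h40
end
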